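/- arXiv:2209.01799 — 2 statements merged into one kernel-verified Lean document; each statement's English description precedes it below -/
import Mathlib

section
/- For every n ≥ 1, the map assigning to each sequence of choices (F⁽ⁿ⁾, …, F⁽¹⁾), with F⁽ᵏ⁾ ∈ {S⁽ᵏ⁾, A⁽ᵏ⁾}, the product vector F⁽ⁿ⁾F⁽ⁿ⁻¹⁾⋯F⁽¹⁾ is injective; consequently the set SA(n) has exactly 2^n elements. -/
noncomputable def Smat (k : ℕ) : Matrix (Fin (2 ^ (k + 1))) (Fin (2 ^ k)) ℝ :=
  Matrix.of fun i j =>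
    if (i : ℕ) < 2 ^ k then (if (i : ℕ) = (j : ℕ) then 1 else 0)
    else (if (i : ℕ) + (j : ℕ) = 2 ^ (k + 1) - 1 then 1 else 0)

noncomputable def Amat (k : ℕ) : Matrix (Fin (2 ^ (k + 1))) (Fin (2 ^ k)) ℝ :=
  Matrix.of fun i j =>
    if (i : ℕ) < 2 ^ k then (if (i : ℕ) = (j : ℕ) then -1 else 0)
    else (if (i : ℕ) + (j : ℕ) = 2 ^ (k + 1) - 1 then 1 else 0)

noncomputable def Fmat (b : Bool) (k : ℕ) : Matrix (Fin (2 ^ (k + 1))) (Fin (2 ^ k)) ℝ :=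
  if b then Amat k else Smat k

noncomputable def prodVec : (n : ℕ) → (Fin n → Bool) → (Fin (2 ^ n) → ℝ)
  | 0, _ => fun _ => 1
  | n + 1, c => (Fmat (c (Fin.last n)) n).mulVec (prodVec n fun i => c i.castSucc)

def SA (n : ℕ) : Set (Fin (2 ^ n) → ℝ) := { v | ∃ c : Fin n → Bool, v = prodVec n c }

/- The top block of every `Fmat b k` is `±I` and the bottom block is `J`. Hence the lower half of
`Fmat b k *ᵥ v` is `v` reversed, which recovers `v`, and its first entry is `±v₀`, which recovers `b`
as soon as `v₀ ≠ 0`; and `v₀` is a product of signs for every product vector. Injectivity follows by induction on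
the number of factors. -/

lemma Fmat_apply (b : Bool) (k : ℕ) (i : Fin (2 ^ (k + 1))) (j : Fin (2 ^ k)) :
    Fmat b k i j =
      if (i : ℕ) < 2 ^ k then (if (i : ℕ) = (j : ℕ) then (if b then -1 else 1) else 0)
      else (if (i : ℕ) + (j : ℕ) = 2 ^ (k + 1) - 1 then 1 else 0) := by
  cases b <;> simp [Fmat, Smat, Amat]

lemma Fmat_mulVec_apply_zero (b : Bool) (k : ℕ) (v : Fin (2 ^ k) → ℝ) :
    (Fmat b k).mulVec v ⟨0, Nat.two_pow_pos _⟩ = (if b then -1 else 1) * v ⟨0, Nat.two_pow_pos _⟩ := by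
  rw [Matrix.mulVec, dotProduct, Finset.sum_eq_single ⟨0, Nat.two_pow_pos _⟩]
  · simp [Fmat_apply]
  · intro j _ hj
    simp [Fmat_apply, (Fin.val_ne_of_ne hj).symm]
  · simp

lemma Fmat_mulVec_apply_rev_castLE (b : Bool) (k : ℕ) (v : Fin (2 ^ k) → ℝ) (j : Fin (2 ^ k)) :
    (Fmat b k).mulVec v (Fin.rev (Fin.castLE (Nat.pow_le_pow_right two_pos k.le_succ) j)) = v j := by
  have hj := j.isLt
  have hpow : 2 ^ (k + 1) = 2 * 2 ^ k := by ring
  have hlow : ¬ 2 ^ (k + 1) - ((j : ℕ) + 1) < 2 ^ k := by omega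
  rw [Matrix.mulVec, dotProduct, Finset.sum_eq_single j]
  · have hanti : 2 ^ (k + 1) - ((j : ℕ) + 1) + (j : ℕ) = 2 ^ (k + 1) - 1 := by omega
    simp [Fmat_apply, hlow, hanti]
  · intro j' _ hj'
    have hanti : ¬ 2 ^ (k + 1) - ((j : ℕ) + 1) + (j' : ℕ) = 2 ^ (k + 1) - 1 := by
      have := j'.isLt
      exact fun h => hj' (Fin.ext (by omega))
    simp [Fmat_apply, hlow, hanti]
  · simp

lemma prodVec_apply_zero_ne_zero (n : ℕ) (c : Fin n → Bool) :
    prodVec n c ⟨0, Nat.two_pow_pos _⟩ ≠ 0 := by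
  induction n with
  | zero => simp [prodVec]
  | succ n ih =>
    rw [prodVec, Fmat_mulVec_apply_zero]
    refine mul_ne_zero ?_ (ih _)
    split <;> norm_num

theorem prodVec_injective (n : ℕ) : Function.Injective (prodVec n) := by
  induction n with
  | zero => exact fun _ _ _ => Subsingleton.elim _ _
  | succ n ih =>
    intro c c' h
    simp only [prodVec] at h
    have hinit : prodVec n (fun i => c i.castSucc) = prodVec n (fun i => c' i.castSucc) := by
      funext j
      simpa only [Fmat_mulVec_apply_rev_castLE] using
        congrFun h (Fin.rev (Fin.castLE (Nat.pow_le_pow_right two_pos n.le_succ) j))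
    have hlast : c (Fin.last n) = c' (Fin.last n) := by
      have h0 := congrFun h ⟨0, Nat.two_pow_pos _⟩
      rw [Fmat_mulVec_apply_zero, Fmat_mulVec_apply_zero, hinit] at h0
      have hsign := mul_right_cancel₀ (prodVec_apply_zero_ne_zero n _) h0
      revert hsign
      cases c (Fin.last n) <;> cases c' (Fin.last n) <;> norm_num
    funext i
    induction i using Fin.lastCases with
    | last => exact hlast
    | cast i => exact congrFun (ih hinit) i

theorem stmt8_general (n : ℕ) :
    Function.Injective (prodVec n) ∧ (SA n).ncard = 2 ^ n := by
  have hSA : SA n = Set.range (prodVec n) := Set.ext fun _ => exists_congr fun _ => eq_comm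
  refine ⟨prodVec_injective n, ?_⟩
  rw [hSA, Set.ncard_range_of_injective (prodVec_injective n)]
  simp

/-- the map from choice sequences to product vectors is injective;
consequently SA(n) has exactly 2^n elements. -/
theorem stmt8 (n : ℕ) (hn : 1 ≤ n) :
    Function.Injective (prodVec n) ∧ (SA n).ncard = 2 ^ n :=
  stmt8_general n
end

section
/- For every n ≥ 1, the 2^n elements of SA(n) form an orthogonal basis of ℝ^(2^n); in particular the linear span of SA(n) is all of ℝ^(2^n). -/
/-! If `u` has length `2 ^ k`, then `F⁽ᵏ⁺¹⁾ u` has upper half `± u` and lower half `J u`, so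
`⟪F u, F' u'⟫ = (±1 · ±1 + 1) ⟪u, u'⟫`, which is `2 ⟪u, u'⟫` when `F = F'` and `0` otherwise.
By induction the `2 ^ n` elements of `SA(n)` are pairwise orthogonal with squared norm `2 ^ n`,
hence linearly independent, hence a basis of `ℝ^(2^n)`. -/

open Matrix Finset

lemma sum_fin_two_pow_succ {M : Type*} [AddCommMonoid M] (k : ℕ) (f : Fin (2 ^ (k + 1)) → M) :
    ∑ i, f i = ∑ j : Fin (2 ^ k), f (Fin.cast (by ring) (Fin.castAdd (2 ^ k) j)) +
      ∑ j : Fin (2 ^ k), f (Fin.cast (by ring) (Fin.natAdd (2 ^ k) j)) := by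
  rw [← Fin.sum_congr' f (by ring : 2 ^ k + 2 ^ k = 2 ^ (k + 1)), Fin.sum_univ_add]

lemma linearIndependent_of_dotProduct_eq_zero {K ι m : Type*} [Field K] [Fintype m]
    {v : ι → m → K} (hself : ∀ i, v i ⬝ᵥ v i ≠ 0) (horth : Pairwise fun i j => v i ⬝ᵥ v j = 0) :
    LinearIndependent K v := by
  rw [linearIndependent_iff']
  intro s g hg i hi
  have hcoord : (∑ j ∈ s, g j • v j) ⬝ᵥ v i = g i * (v i ⬝ᵥ v i) := by
    rw [sum_dotProduct, sum_eq_single i (fun j _ hji => by rw [smul_dotProduct, horth hji, smul_zero])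
      (absurd hi), smul_dotProduct, smul_eq_mul]
  rw [hg, zero_dotProduct] at hcoord
  exact (mul_eq_zero.mp hcoord.symm).resolve_right (hself i)

lemma Fmat_mulVec_castAdd (b : Bool) (k : ℕ) (u : Fin (2 ^ k) → ℝ) (j : Fin (2 ^ k)) :
    (Fmat b k *ᵥ u) (Fin.cast (by ring) (Fin.castAdd (2 ^ k) j)) = if b then -u j else u j := by
  cases b <;> simp [Fmat, Smat, Amat, mulVec, dotProduct, Fin.val_inj]

lemma Fmat_mulVec_natAdd (b : Bool) (k : ℕ) (u : Fin (2 ^ k) → ℝ) (j : Fin (2 ^ k)) :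
    (Fmat b k *ᵥ u) (Fin.cast (by ring) (Fin.natAdd (2 ^ k) j)) = u j.rev := by
  have hrev : ∀ j' : Fin (2 ^ k), (j : ℕ) + 2 ^ k + j' = 2 ^ (k + 1) - 1 ↔ j.rev = j' := by
    intro j'
    rw [Fin.ext_iff, Fin.val_rev, pow_succ]
    omega
  cases b <;> simp [Fmat, Smat, Amat, mulVec, dotProduct, hrev]

lemma Fmat_mulVec_dotProduct (b b' : Bool) (k : ℕ) (u u' : Fin (2 ^ k) → ℝ) :
    (Fmat b k *ᵥ u) ⬝ᵥ (Fmat b' k *ᵥ u') = if b = b' then 2 * (u ⬝ᵥ u') else 0 := by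
  have hrev : ∑ j : Fin (2 ^ k), u j.rev * u' j.rev = u ⬝ᵥ u' :=
    Equiv.sum_comp Fin.revPerm fun j => u j * u' j
  rw [dotProduct, sum_fin_two_pow_succ]
  simp only [Fmat_mulVec_castAdd, Fmat_mulVec_natAdd, hrev]
  cases b <;> cases b' <;> simp [dotProduct] <;> ring

lemma prodVec_succ (n : ℕ) (c : Fin (n + 1) → Bool) :
    prodVec (n + 1) c = Fmat (c (Fin.last n)) n *ᵥ prodVec n (Fin.init c) := rfl

lemma prodVec_dotProduct (n : ℕ) (c c' : Fin n → Bool) :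
    prodVec n c ⬝ᵥ prodVec n c' = if c = c' then 2 ^ n else 0 := by
  induction n with
  | zero => simp [prodVec, dotProduct, Subsingleton.elim c c']
  | succ n ih =>
    rw [prodVec_succ, prodVec_succ, Fmat_mulVec_dotProduct, ih]
    have hcc : c = c' ↔ Fin.init c = Fin.init c' ∧ c (Fin.last n) = c' (Fin.last n) := by
      conv_lhs => rw [← Fin.snoc_init_self c, ← Fin.snoc_init_self c']
      exact Fin.snoc_inj
    simp only [hcc]
    split_ifs <;> simp_all [pow_succ, mul_comm]

lemma prodVec_linearIndependent (n : ℕ) : LinearIndependent ℝ (prodVec n) :=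
  linearIndependent_of_dotProduct_eq_zero (fun c => by simp [prodVec_dotProduct])
    (fun c c' h => by simp [prodVec_dotProduct, h])

lemma SA_eq_range (n : ℕ) : SA n = Set.range (prodVec n) := by
  ext v
  simp [SA, eq_comm]

theorem stmt9_general (n : ℕ) :
    (∀ v ∈ SA n, ∀ w ∈ SA n, v ≠ w → ∑ i, v i * w i = 0) ∧
    LinearIndependent ℝ (fun v : SA n => (v : Fin (2 ^ n) → ℝ)) ∧
    Submodule.span ℝ (SA n) = ⊤ := by
  have hind := prodVec_linearIndependent n
  rw [SA_eq_range]
  refine ⟨?_, linearIndepOn_id_range_iff hind.injective |>.mpr hind, ?_⟩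
  · rintro _ ⟨c, rfl⟩ _ ⟨c', rfl⟩ hne
    exact (prodVec_dotProduct n c c').trans (if_neg (ne_of_apply_ne _ hne))
  · exact hind.span_eq_top_of_card_eq_finrank (by simp)

/-- the 2^n elements of SA(n) form an orthogonal basis of ℝ^(2^n);
in particular the linear span of SA(n) is all of ℝ^(2^n). -/
theorem stmt9 (n : ℕ) (hn : 1 ≤ n) :
    (∀ v ∈ SA n, ∀ w ∈ SA n, v ≠ w → ∑ i, v i * w i = 0) ∧
    LinearIndependent ℝ (fun v : SA n => (v : Fin (2 ^ n) → ℝ)) ∧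
    Submodule.span ℝ (SA n) = ⊤ :=
  stmt9_general n
end
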